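/- For n >= 1, the number of ascent sequences of length n avoiding the three patterns 0102, 0112, and 0121 equals 2^{n-1} + C(n, 3). -/

import Mathlib

/-- Number of ascents of a sequence (list) of natural numbers. -/
def asc (l : List ℕ) : ℕ :=
  ((List.range (l.length - 1)).filter (fun j => l.getD j 0 < l.getD (j + 1) 0)).length

/-- `x` is an ascent sequence: nonempty, starts with 0, and each later entry is
at most one more than the number of ascents of the preceding prefix. -/
def IsAscSeq (x : List ℕ) : Prop :=
  x ≠ [] ∧ x.getD 0 0 = 0 ∧
    ∀ i, 1 ≤ i → i < x.length → x.getD i 0 ≤ 1 + asc (x.take i)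

/-- `x` contains the pattern `p`: some subsequence of `x` is order-isomorphic
(including equalities) to `p`, i.e. its reduction equals `p`. -/
def Contains (p x : List ℕ) : Prop :=
  ∃ y : List ℕ, y.Sublist x ∧ y.length = p.length ∧
    ∀ i j, i < p.length → j < p.length →
      (y.getD i 0 < y.getD j 0 ↔ p.getD i 0 < p.getD j 0)

/-- `x` avoids the pattern `p`. -/
def Avoids (p x : List ℕ) : Prop := ¬ Contains p x


-- asc as Nat.count
lemma asc_eq_count (l : List ℕ) :
    asc l = Nat.count (fun j => l.getD j 0 < l.getD (j + 1) 0) (l.length - 1) := by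
  simp [asc, Nat.count, List.countP_eq_length_filter]

lemma getD_take (l : List ℕ) (i j : ℕ) (h : j < i) :
    (l.take i).getD j 0 = l.getD j 0 := by
  rcases lt_or_ge j l.length with hj | hj
  · rw [List.getD_eq_getElem _ _ (by simp; omega), List.getD_eq_getElem _ _ hj,
      List.getElem_take]
  · rw [List.getD_eq_default _ _ (by simp; omega), List.getD_eq_default _ _ hj]

lemma count_congr (p q : ℕ → Prop) [DecidablePred p] [DecidablePred q] (n : ℕ)
    (h : ∀ j < n, (p j ↔ q j)) : Nat.count p n = Nat.count q n := by
  induction n with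
  | zero => simp
  | succ n ih =>
    rw [Nat.count_succ, Nat.count_succ, ih (fun j hj => h j (by omega))]
    by_cases hp : p n
    · simp [hp, (h n (by omega)).mp hp]
    · simp only [if_neg hp, if_neg (fun hq => hp ((h n (by omega)).mpr hq))]

lemma asc_take (x : List ℕ) (i : ℕ) (hi : i ≤ x.length) :
    asc (x.take i) = Nat.count (fun j => x.getD j 0 < x.getD (j + 1) 0) (i - 1) := by
  rw [asc_eq_count]
  have hl : (x.take i).length = i := by simp; omega
  rw [hl]
  exact count_congr _ _ _ (fun j hj => by
    rw [getD_take _ _ _ (by omega), getD_take _ _ _ (by omega)])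

lemma count_interval (p : ℕ → Prop) [DecidablePred p] (lo hi i : ℕ)
    (h : ∀ j < i, (p j ↔ lo ≤ j ∧ j < hi)) :
    Nat.count p i = min hi i - min lo i := by
  induction i with
  | zero => simp
  | succ i ih =>
    rw [Nat.count_succ, ih (fun j hj => h j (by omega))]
    by_cases hp : p i
    · have := (h i (by omega)).mp hp
      simp only [if_pos hp]
      omega
    · have : ¬(lo ≤ i ∧ i < hi) := fun hc => hp ((h i (by omega)).mpr hc)
      simp only [if_neg hp]
      omega

def quadEmb (i j k l N : ℕ) : ℕ → ℕ := fun t =>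
  if t = 0 then i else if t = 1 then j else if t = 2 then k else if t = 3 then l else N + t

lemma quad_sublist (x : List ℕ) (i j k l : ℕ)
    (hij : i < j) (hjk : j < k) (hkl : k < l) (hl : l < x.length) :
    [x.getD i 0, x.getD j 0, x.getD k 0, x.getD l 0].Sublist x := by
  have hmono : StrictMono (quadEmb i j k l x.length) := by
    intro s t hst
    unfold quadEmb
    split_ifs <;> omega
  apply List.sublist_of_orderEmbedding_getElem?_eq (OrderEmbedding.ofStrictMono _ hmono)
  intro ix
  have hcoe : ∀ u, (OrderEmbedding.ofStrictMono _ hmono) u = quadEmb i j k l x.length u :=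
    fun _ => rfl
  rw [hcoe]
  rcases lt_or_ge ix 4 with h | h
  · interval_cases ix <;>
      simp [quadEmb, List.getElem?_eq_getElem (show i < x.length by omega),
        List.getElem?_eq_getElem (show j < x.length by omega),
        List.getElem?_eq_getElem (show k < x.length by omega),
        List.getElem?_eq_getElem hl, List.getD_eq_getElem x 0] <;>
      rw [List.getD_eq_getElem x 0 (by omega)]
  · have h4 : quadEmb i j k l x.length ix = x.length + ix := by
      unfold quadEmb; split_ifs <;> omega
    rw [h4, List.getElem?_eq_none (by simp; omega),
      List.getElem?_eq_none (by omega)]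

lemma contains_intro (p x : List ℕ) (hp : p.length = 4) (i j k l : ℕ)
    (hij : i < j) (hjk : j < k) (hkl : k < l) (hl : l < x.length)
    (hiso : ∀ i' j', i' < 4 → j' < 4 →
      ([x.getD i 0, x.getD j 0, x.getD k 0, x.getD l 0].getD i' 0 <
        [x.getD i 0, x.getD j 0, x.getD k 0, x.getD l 0].getD j' 0 ↔
        p.getD i' 0 < p.getD j' 0)) : Contains p x := by
  exact ⟨_, quad_sublist x i j k l hij hjk hkl hl, by simp [hp], by rw [hp]; exact hiso⟩

lemma contains_elim (p x : List ℕ) (hp : p.length = 4) (h : Contains p x) :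
    ∃ i j k l, i < j ∧ j < k ∧ k < l ∧ l < x.length ∧
      ∀ i' j', i' < 4 → j' < 4 →
        (x.getD ([i,j,k,l].getD i' 0) 0 < x.getD ([i,j,k,l].getD j' 0) 0 ↔
          p.getD i' 0 < p.getD j' 0) := by
  obtain ⟨y, hsub, hlen, hiso⟩ := h
  rw [hp] at hlen hiso
  obtain ⟨f, hf⟩ := List.sublist_iff_exists_orderEmbedding_getElem?_eq.mp hsub
  have hval : ∀ t, t < 4 → y.getD t 0 = x.getD (f t) 0 := by
    intro t ht
    have h1 := hf t
    rw [List.getElem?_eq_getElem (by omega)] at h1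
    have h2 : f t < x.length := by
      by_contra hc
      rw [List.getElem?_eq_none (by omega)] at h1
      exact Option.some_ne_none _ h1
    rw [List.getElem?_eq_getElem h2] at h1
    rw [List.getD_eq_getElem y 0 (by omega), List.getD_eq_getElem x 0 h2]
    simpa using h1
  have hflt : f 3 < x.length := by
    by_contra hc
    have h1 := hf 3
    rw [List.getElem?_eq_getElem (by omega), List.getElem?_eq_none (by omega)] at h1
    exact Option.some_ne_none _ h1
  refine ⟨f 0, f 1, f 2, f 3, f.strictMono (by omega), f.strictMono (by omega),
    f.strictMono (by omega), hflt, ?_⟩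
  intro i' j' hi' hj'
  have h5 := hiso i' j' (by omega) (by omega)
  rw [hval i' hi', hval j' hj'] at h5
  convert h5 using 3 <;>
  · interval_cases i' <;> interval_cases j' <;> rfl

lemma av0102 (x : List ℕ) (h : Avoids [0,1,0,2] x) :
    ∀ i j k l, i < j → j < k → k < l → l < x.length →
      x.getD i 0 < x.getD j 0 → x.getD k 0 = x.getD i 0 → x.getD l 0 ≤ x.getD j 0 := by
  intro i j k l hij hjk hkl hl h1 h2
  by_contra hc
  refine h (contains_intro _ x rfl i j k l hij hjk hkl hl ?_)
  set A := x.getD i 0 with hA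
  set B := x.getD j 0 with hB
  set C := x.getD k 0 with hC
  set D := x.getD l 0 with hD
  intro i' j' hi' hj'
  interval_cases i' <;> interval_cases j' <;> simp [List.getD] <;> omega

lemma av0112 (x : List ℕ) (h : Avoids [0,1,1,2] x) :
    ∀ i j k l, i < j → j < k → k < l → l < x.length →
      x.getD i 0 < x.getD j 0 → x.getD j 0 = x.getD k 0 → x.getD l 0 ≤ x.getD j 0 := by
  intro i j k l hij hjk hkl hl h1 h2
  by_contra hc
  refine h (contains_intro _ x rfl i j k l hij hjk hkl hl ?_)
  set A := x.getD i 0 with hA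
  set B := x.getD j 0 with hB
  set C := x.getD k 0 with hC
  set D := x.getD l 0 with hD
  intro i' j' hi' hj'
  interval_cases i' <;> interval_cases j' <;> simp [List.getD] <;> omega

lemma av0121 (x : List ℕ) (h : Avoids [0,1,2,1] x) :
    ∀ i j k l, i < j → j < k → k < l → l < x.length →
      x.getD i 0 < x.getD j 0 → x.getD j 0 < x.getD k 0 → x.getD l 0 ≠ x.getD j 0 := by
  intro i j k l hij hjk hkl hl h1 h2 hc
  refine h (contains_intro _ x rfl i j k l hij hjk hkl hl ?_)
  set A := x.getD i 0 with hA
  set B := x.getD j 0 with hB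
  set C := x.getD k 0 with hC
  set D := x.getD l 0 with hD
  intro i' j' hi' hj'
  interval_cases i' <;> interval_cases j' <;> simp [List.getD] <;> omega

lemma avoids0102_of (x : List ℕ)
    (h : ∀ i j k l, i < j → j < k → k < l → l < x.length →
      ¬(x.getD i 0 < x.getD j 0 ∧ x.getD k 0 = x.getD i 0 ∧ x.getD j 0 < x.getD l 0)) :
    Avoids [0,1,0,2] x := by
  intro hc
  obtain ⟨i, j, k, l, hij, hjk, hkl, hl, hiso⟩ := contains_elim [0,1,0,2] x (by norm_num) hc
  refine h i j k l hij hjk hkl hl ?_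
  have h1 := hiso 0 1 (by norm_num) (by norm_num)
  have h2 := hiso 0 2 (by norm_num) (by norm_num)
  have h3 := hiso 2 0 (by norm_num) (by norm_num)
  have h4 := hiso 1 3 (by norm_num) (by norm_num)
  simp [List.getD] at h1 h2 h3 h4 ⊢
  omega

lemma avoids0112_of (x : List ℕ)
    (h : ∀ i j k l, i < j → j < k → k < l → l < x.length →
      ¬(x.getD i 0 < x.getD j 0 ∧ x.getD j 0 = x.getD k 0 ∧ x.getD j 0 < x.getD l 0)) :
    Avoids [0,1,1,2] x := by
  intro hc
  obtain ⟨i, j, k, l, hij, hjk, hkl, hl, hiso⟩ := contains_elim [0,1,1,2] x (by norm_num) hc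
  refine h i j k l hij hjk hkl hl ?_
  have h1 := hiso 0 1 (by norm_num) (by norm_num)
  have h2 := hiso 1 2 (by norm_num) (by norm_num)
  have h3 := hiso 2 1 (by norm_num) (by norm_num)
  have h4 := hiso 1 3 (by norm_num) (by norm_num)
  simp [List.getD] at h1 h2 h3 h4 ⊢
  omega

lemma avoids0121_of (x : List ℕ)
    (h : ∀ i j k l, i < j → j < k → k < l → l < x.length →
      ¬(x.getD i 0 < x.getD j 0 ∧ x.getD j 0 < x.getD k 0 ∧ x.getD l 0 = x.getD j 0)) :
    Avoids [0,1,2,1] x := by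
  intro hc
  obtain ⟨i, j, k, l, hij, hjk, hkl, hl, hiso⟩ := contains_elim [0,1,2,1] x (by norm_num) hc
  refine h i j k l hij hjk hkl hl ?_
  have h1 := hiso 0 1 (by norm_num) (by norm_num)
  have h2 := hiso 1 2 (by norm_num) (by norm_num)
  have h3 := hiso 1 3 (by norm_num) (by norm_num)
  have h4 := hiso 3 1 (by norm_num) (by norm_num)
  simp [List.getD] at h1 h2 h3 h4 ⊢
  omega

def F (a m b i : ℕ) : ℕ :=
  if i < a then 0 else if i < a + m then i - a + 1 else if i < a + m + b then m else 0

def spike (a m b c : ℕ) : List ℕ := (List.range (a + m + b + c)).map (F a m b)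

lemma spike_length (a m b c : ℕ) : (spike a m b c).length = a + m + b + c := by
  simp [spike]

lemma spike_getD (a m b c i : ℕ) : (spike a m b c).getD i 0 = F a m b i := by
  rcases lt_or_ge i (a + m + b + c) with h | h
  · rw [List.getD_eq_getElem _ _ (by simp [spike]; omega)]
    simp [spike]
  · rw [List.getD_eq_default _ _ (by simp [spike]; omega)]
    unfold F
    split_ifs <;> omega

lemma F_asc_iff (a m b : ℕ) (ha : 1 ≤ a) (hm : 2 ≤ m) (j : ℕ) :
    (F a m b j < F a m b (j + 1)) ↔ (a - 1 ≤ j ∧ j < a + m - 1) := by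
  unfold F
  split_ifs <;> omega

lemma F_cases (a m b t : ℕ) : (t < a ∧ F a m b t = 0) ∨ (a ≤ t ∧ t < a+m ∧ F a m b t = t-a+1)
    ∨ (a+m ≤ t ∧ t < a+m+b ∧ F a m b t = m) ∨ (a+m+b ≤ t ∧ F a m b t = 0) := by
  unfold F; split_ifs <;> omega

lemma spike_isAscSeq (a m b c : ℕ) (ha : 1 ≤ a) (hm : 2 ≤ m) :
    IsAscSeq (spike a m b c) := by
  refine ⟨by simp [spike]; omega, by rw [spike_getD]; unfold F; split_ifs <;> omega, ?_⟩
  intro i hi hlen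
  rw [spike_length] at hlen
  rw [asc_take _ _ (by rw [spike_length]; omega), spike_getD]
  have hcnt : Nat.count (fun j => (spike a m b c).getD j 0 < (spike a m b c).getD (j+1) 0) (i-1)
      = min (a + m - 1) (i-1) - min (a-1) (i-1) := by
    apply count_interval
    intro j _
    rw [spike_getD, spike_getD]
    exact F_asc_iff a m b ha hm j
  rw [hcnt]
  have h1 := F_cases a m b i
  omega

lemma spike_avoids (a m b c : ℕ) (ha : 1 ≤ a) (hm : 2 ≤ m) :
    Avoids [0,1,0,2] (spike a m b c) ∧ Avoids [0,1,1,2] (spike a m b c) ∧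
      Avoids [0,1,2,1] (spike a m b c) := by
  refine ⟨avoids0102_of _ ?_, avoids0112_of _ ?_, avoids0121_of _ ?_⟩ <;>
  · intro i j k l hij hjk hkl hl
    rw [spike_getD, spike_getD, spike_getD, spike_getD]
    have h1 := F_cases a m b i
    have h2 := F_cases a m b j
    have h3 := F_cases a m b k
    have h4 := F_cases a m b l
    omega

lemma forward (x : List ℕ) (hA : IsAscSeq x)
    (h1 : Avoids [0,1,0,2] x) (h2 : Avoids [0,1,1,2] x) (h3 : Avoids [0,1,2,1] x) :
    (∀ v ∈ x, v ≤ 1) ∨ ∃ a m b, 1 ≤ a ∧ 2 ≤ m ∧ a + m + b ≤ x.length ∧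
      x = spike a m b (x.length - (a + m + b)) := by
  obtain ⟨hne, h0, hasc⟩ := hA
  have hout : ∀ i, x.length ≤ i → x.getD i 0 = 0 := fun i hi => List.getD_eq_default _ _ hi
  by_cases hsmall : ∀ v ∈ x, v ≤ 1
  · exact Or.inl hsmall
  right
  push_neg at hsmall
  obtain ⟨v, hv, hv2⟩ := hsmall
  obtain ⟨p, hp, hpv⟩ := List.mem_iff_getElem.mp hv
  have hgp : 2 ≤ x.getD p 0 := by rw [List.getD_eq_getElem _ _ hp]; omega
  have A1 := av0102 x h1
  have A2 := av0112 x h2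
  have A3 := av0121 x h3
  have hbound : ∀ i, 1 ≤ i → i < x.length →
      x.getD i 0 ≤ 1 + Nat.count (fun j => x.getD j 0 < x.getD (j+1) 0) (i-1) := by
    intro i hi hilen
    have hb := hasc i hi hilen
    rwa [asc_take x i (by omega)] at hb
  have hex : ∃ i, x.getD i 0 ≠ 0 := ⟨p, by omega⟩
  set a := Nat.find hex with ha_def
  have haspec : x.getD a 0 ≠ 0 := Nat.find_spec hex
  have hamin : ∀ i, i < a → x.getD i 0 = 0 := by
    intro i hi
    have := Nat.find_min hex hi
    simpa using this
  have ha1 : 1 ≤ a := by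
    rcases Nat.eq_zero_or_pos a with h | h
    · exact absurd (h ▸ h0) haspec
    · exact h
  have han : a < x.length := by
    by_contra hc
    exact haspec (hout a (by omega))
  have hga : x.getD a 0 = 1 := by
    have hb := hbound a ha1 han
    have hcnt0 : Nat.count (fun j => x.getD j 0 < x.getD (j+1) 0) (a-1) = 0 := by
      have := count_interval (fun j => x.getD j 0 < x.getD (j+1) 0) 0 0 (a-1) (by
        intro j hj
        show x.getD j 0 < x.getD (j+1) 0 ↔ 0 ≤ j ∧ j < 0
        rw [hamin j (by omega), hamin (j+1) (by omega)]
        omega)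
      simpa using this
    omega
  have hex2 : ∃ i, a < i ∧ x.getD i 0 = 0 := ⟨x.length, by omega, hout _ le_rfl⟩
  set d := Nat.find hex2 with hd_def
  have hdspec : a < d ∧ x.getD d 0 = 0 := Nat.find_spec hex2
  have hdmin : ∀ i, a < i → i < d → x.getD i 0 ≠ 0 :=
    fun i hi1 hi2 hc => Nat.find_min hex2 hi2 ⟨hi1, hc⟩
  have hdn : d ≤ x.length := Nat.find_le ⟨by omega, hout _ le_rfl⟩
  have hpa : a ≤ p := by
    by_contra hc
    rw [hamin p (by omega)] at hgp
    omega
  have hpd : p < d := by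
    by_contra hc
    have hdp : d < p := by
      rcases Nat.lt_or_ge d p with h | h
      · exact h
      · exfalso; have : d = p := by omega
        rw [← this] at hgp; omega
    have := A1 0 a d p (by omega) hdspec.1 hdp (by omega) (by rw [h0, hga]; omega)
      (by rw [hdspec.2, h0]) 
    rw [hga] at this
    omega
  have hap : a < p := by
    rcases Nat.lt_or_ge a p with h | h
    · exact h
    · exfalso; have heq : a = p := by omega
      rw [heq] at hga
      omega
  have main : ∀ i, a ≤ i → i < d →
      (∀ j, a ≤ j → j ≤ i → x.getD j 0 = j - a + 1) ∨
      (∃ e, a ≤ e ∧ e < i ∧ (∀ j, a ≤ j → j ≤ e → x.getD j 0 = j - a + 1) ∧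
        (∀ j, e ≤ j → j ≤ i → x.getD j 0 = e - a + 1)) := by
    intro i
    induction i with
    | zero => intro hc _; left; intro j hj1 hj2; omega
    | succ i ih =>
      intro hai hisd
      rcases Nat.lt_or_ge i a with hia | hia
      · -- i + 1 = a
        have hia' : i + 1 = a := by omega
        left
        intro j hj1 hj2
        have : j = a := by omega
        rw [this, hga]; omega
      · have hid : i < d := by omega
        have hi1len : i + 1 < x.length := by omega
        have hgi1 : x.getD (i+1) 0 ≠ 0 := hdmin (i+1) (by omega) hisd
        have hb := hbound (i+1) (by omega) hi1len
        rw [Nat.add_sub_cancel] at hb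
        rcases ih hia hid with hrun | ⟨e, hea, hei, hrun, hplat⟩
        · -- run through i
          have hcnt : Nat.count (fun j => x.getD j 0 < x.getD (j+1) 0) i = i - a + 1 := by
            have := count_interval (fun j => x.getD j 0 < x.getD (j+1) 0) (a-1) i i (by
              intro j hj
              show x.getD j 0 < x.getD (j+1) 0 ↔ a - 1 ≤ j ∧ j < i
              constructor
              · intro hlt
                by_contra hc
                push_neg at hc
                rcases Nat.lt_or_ge j (a-1) with hj2 | hj2
                · rw [hamin j (by omega), hamin (j+1) (by omega)] at hlt; omega
                · omega
              · intro ⟨hj1, hj2⟩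
                rcases Nat.eq_or_lt_of_le hj1 with hj3 | hj3
                · rw [hamin j (by omega), hrun (j+1) (by omega) (by omega)]
                  omega
                · rw [hrun j (by omega) (by omega), hrun (j+1) (by omega) (by omega)]
                  omega)
            rw [this]; omega
          rw [hcnt] at hb
          rcases Nat.lt_or_ge (x.getD (i+1) 0) (i - a + 1) with hv | hv
          · -- v < M : contradiction via A3
            exfalso
            set w := x.getD (i+1) 0 with hw_def
            have hw1 : 1 ≤ w := by omega
            have hwle : a + w ≤ i := by omega
            have hval1 : x.getD (a+w-1) 0 = w := by
              rw [hrun (a+w-1) (by omega) (by omega)]; omega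
            have hval2 : x.getD (a+w) 0 = w + 1 := by
              rw [hrun (a+w) (by omega) (by omega)]; omega
            exact A3 0 (a+w-1) (a+w) (i+1) (by omega) (by omega) (by omega) hi1len
              (by rw [h0, hval1]; omega) (by rw [hval1, hval2]; omega)
              (by rw [hval1])
          · rcases Nat.eq_or_lt_of_le hv with hv2 | hv2
            · -- v = M : start plateau
              right
              refine ⟨i, hia, by omega, fun j hj1 hj2 => hrun j hj1 hj2, ?_⟩
              intro j hj1 hj2
              rcases Nat.eq_or_lt_of_le hj2 with hj3 | hj3
              · rw [hj3, ← hv2]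
              · rw [hrun j (by omega) (by omega)]; omega
            · -- v = M + 1 : extend run
              left
              intro j hj1 hj2
              rcases Nat.eq_or_lt_of_le hj2 with hj3 | hj3
              · rw [hj3]; omega
              · exact hrun j hj1 (by omega)
        · -- plateau case
          have hgiM : x.getD i 0 = e - a + 1 := hplat i (by omega) le_rfl
          have hgeM : x.getD e 0 = e - a + 1 := hplat e le_rfl (by omega)
          have hvM : x.getD (i+1) 0 ≤ e - a + 1 := by
            have h5 := A2 0 e i (i+1) (by omega) hei (by omega) hi1len
              (by rw [h0, hgeM]; omega) (by rw [hgeM, hgiM])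
            rwa [hgeM] at h5
          rcases Nat.lt_or_ge (x.getD (i+1) 0) (e - a + 1) with hv | hv
          · -- v < M : contradiction via A3
            exfalso
            set w := x.getD (i+1) 0 with hw_def
            have hw1 : 1 ≤ w := by omega
            have hwle : a + w ≤ e := by omega
            have hval1 : x.getD (a+w-1) 0 = w := by
              rw [hrun (a+w-1) (by omega) (by omega)]; omega
            have hval2 : x.getD (a+w) 0 = w + 1 := by
              rw [hrun (a+w) (by omega) (by omega)]; omega
            exact A3 0 (a+w-1) (a+w) (i+1) (by omega) (by omega) (by omega) hi1len
              (by rw [h0, hval1]; omega) (by rw [hval1, hval2]; omega)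
              (by rw [hval1])
          · -- v = M : extend plateau
            right
            refine ⟨e, hea, by omega, hrun, ?_⟩
            intro j hj1 hj2
            rcases Nat.eq_or_lt_of_le hj2 with hj3 | hj3
            · rw [hj3]; omega
            · exact hplat j hj1 (by omega)
  -- conclusion
  have hafter : ∀ l, d ≤ l → x.getD l 0 = 0 := by
    intro l hl
    rcases Nat.eq_or_lt_of_le hl with hl1 | hl1
    · rw [← hl1]; exact hdspec.2
    · rcases Nat.lt_or_ge l x.length with hlen | hlen
      · by_contra hc
        rcases Nat.lt_or_ge (x.getD l 0) 2 with hc2 | hc2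
        · -- value 1: A3 with (0, a, p, l)
          have := A3 0 a p l (by omega) hap (by omega) hlen
            (by rw [h0, hga]; omega) (by rw [hga]; omega)
          rw [hga] at this
          omega
        · -- value ≥ 2: A1 with (0, a, d, l)
          have := A1 0 a d l (by omega) hdspec.1 hl1 hlen
            (by rw [h0, hga]; omega) (by rw [hdspec.2, h0])
          rw [hga] at this
          omega
      · exact hout l hlen
  rcases main (d-1) (by omega) (by omega) with hrun | ⟨e, hea, hed, hrun, hplat⟩
  · -- pure run: m = d - a, b = 0
    have hm2 : 2 ≤ d - a := by
      have := hrun p hpa (by omega)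
      omega
    refine ⟨a, d - a, 0, ha1, hm2, by omega, ?_⟩
    apply List.ext_getElem (by rw [spike_length]; omega)
    intro i hi1 hi2
    rw [← List.getD_eq_getElem x 0 hi1, ← List.getD_eq_getElem _ 0 hi2, spike_getD]
    unfold F
    split_ifs with t1 t2 t3
    · exact hamin i t1
    · rw [hrun i (by omega) (by omega)]
    · omega
    · exact hafter i (by omega)
  · -- plateau: m = e - a + 1, b = d - 1 - e
    have hm2 : 2 ≤ e - a + 1 := by
      rcases Nat.lt_or_ge e p with hc | hc
      · have := hplat p (by omega) (by omega)
        omega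
      · have := hrun p hpa hc
        omega
    refine ⟨a, e - a + 1, d - 1 - e, ha1, hm2, by omega, ?_⟩
    apply List.ext_getElem (by rw [spike_length]; omega)
    intro i hi1 hi2
    rw [← List.getD_eq_getElem x 0 hi1, ← List.getD_eq_getElem _ 0 hi2, spike_getD]
    unfold F
    split_ifs with t1 t2 t3
    · exact hamin i t1
    · rw [hrun i (by omega) (by omega)]
    · rw [hplat i (by omega) (by omega)]
    · exact hafter i (by omega)

-- binary lists
lemma binsmall_avoids (x : List ℕ) (hs : ∀ i, x.getD i 0 ≤ 1) :
    Avoids [0,1,0,2] x ∧ Avoids [0,1,1,2] x ∧ Avoids [0,1,2,1] x := by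
  refine ⟨avoids0102_of _ ?_, avoids0112_of _ ?_, avoids0121_of _ ?_⟩ <;>
  · intro i j k l _ _ _ _
    have := hs i; have := hs j; have := hs k; have := hs l
    omega

def BS (n : ℕ) : Finset (List ℕ) :=
  (Finset.univ : Finset (Fin (n-1) → Fin 2)).image
    (fun t => 0 :: List.ofFn (fun i => (t i : ℕ)))

def TP (n : ℕ) : Finset (ℕ × ℕ × ℕ) :=
  ((Finset.range (n+1)) ×ˢ (Finset.range (n+1)) ×ˢ (Finset.range (n+1))).filter
    (fun q => 1 ≤ q.1 ∧ 2 ≤ q.2.1 ∧ q.1 + q.2.1 + q.2.2 ≤ n)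

def TS (n : ℕ) : Finset (List ℕ) :=
  (TP n).image (fun q => spike q.1 q.2.1 q.2.2 (n - (q.1 + q.2.1 + q.2.2)))

lemma BS_card (n : ℕ) : (BS n).card = 2 ^ (n - 1) := by
  rw [BS, Finset.card_image_of_injective _ ?_, Finset.card_univ]
  · simp
  · intro t t' h
    simp only [List.cons.injEq, true_and] at h
    have h2 := List.ofFn_injective h
    funext i
    exact Fin.ext (by simpa using congrFun h2 i)

lemma mem_BS (n : ℕ) (hn : 1 ≤ n) (z : List ℕ) :
    z ∈ BS n ↔ z.length = n ∧ z.getD 0 0 = 0 ∧ ∀ i, z.getD i 0 ≤ 1 := by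
  constructor
  · intro hz
    rw [BS, Finset.mem_image] at hz
    obtain ⟨t, _, rfl⟩ := hz
    refine ⟨by simp; omega, by simp, ?_⟩
    intro i
    match i with
    | 0 => simp
    | (i+1) =>
      rcases lt_or_ge (i+1) (0 :: List.ofFn (fun i => ((t i : ℕ)))).length with h | h
      · rw [List.getD_eq_getElem _ _ h]
        simp only [List.getElem_cons_succ, List.getElem_ofFn]
        exact Nat.lt_succ_iff.mp (t _).isLt
      · rw [List.getD_eq_default _ _ h]; omega
  · rintro ⟨hlen, h0, hs⟩
    rw [BS, Finset.mem_image]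
    refine ⟨fun i => ⟨z.getD ((i:ℕ)+1) 0, by have h5 := hs ((i:ℕ)+1); omega⟩,
      Finset.mem_univ _, ?_⟩
    symm
    apply List.ext_getElem (by simp; omega)
    intro i hi1 hi2
    match i with
    | 0 =>
      rw [List.getElem_cons_zero, ← List.getD_eq_getElem z 0 hi1]
      exact h0
    | (i+1) =>
      simp only [List.getElem_cons_succ, List.getElem_ofFn]
      exact (List.getD_eq_getElem z 0 hi1).symm

lemma TP_card (n : ℕ) : (TP n).card = n.choose 3 := by
  have hpc := Finset.card_powersetCard 3 (Finset.range n)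
  rw [Finset.card_range] at hpc
  rw [← hpc]
  apply Finset.card_bij (fun q _ => ({q.1 - 1, q.1 + q.2.1 - 2, q.1 + q.2.1 + q.2.2 - 1} : Finset ℕ))
  · intro q hq
    rw [TP, Finset.mem_filter] at hq
    obtain ⟨-, hq1, hq2, hq3⟩ := hq
    rw [Finset.mem_powersetCard]
    constructor
    · intro z hz
      simp only [Finset.mem_insert, Finset.mem_singleton] at hz
      rw [Finset.mem_range]
      omega
    · rw [Finset.card_eq_three]
      exact ⟨_, _, _, by omega, by omega, by omega, rfl⟩
  · intro q hq q' hq' heq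
    rw [TP, Finset.mem_filter] at hq hq'
    obtain ⟨-, hq1, hq2, hq3⟩ := hq
    obtain ⟨-, hp1, hp2, hp3⟩ := hq'
    have h1 := Finset.ext_iff.mp heq (q.1 - 1)
    have h2 := Finset.ext_iff.mp heq (q.1 + q.2.1 - 2)
    have h3 := Finset.ext_iff.mp heq (q.1 + q.2.1 + q.2.2 - 1)
    have h4 := Finset.ext_iff.mp heq (q'.1 - 1)
    have h5 := Finset.ext_iff.mp heq (q'.1 + q'.2.1 - 2)
    have h6 := Finset.ext_iff.mp heq (q'.1 + q'.2.1 + q'.2.2 - 1)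
    simp only [Finset.mem_insert, Finset.mem_singleton, eq_self_iff_true, true_or, or_true,
      true_iff, iff_true] at h1 h2 h3 h4 h5 h6
    have e1 : q.1 = q'.1 := by omega
    have e2 : q.2.1 = q'.2.1 := by omega
    have e3 : q.2.2 = q'.2.2 := by omega
    exact Prod.ext e1 (Prod.ext e2 e3)
  · intro s hs
    rw [Finset.mem_powersetCard] at hs
    obtain ⟨hsub, hcard⟩ := hs
    obtain ⟨u, v, w, huv, huw, hvw, rfl⟩ := Finset.card_eq_three.mp hcard
    have hu : u < n := Finset.mem_range.mp (hsub (by simp))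
    have hv : v < n := Finset.mem_range.mp (hsub (by simp))
    have hw : w < n := Finset.mem_range.mp (hsub (by simp))
    set u' := min u (min v w) with hu'
    set w' := max u (max v w) with hw'
    set v' := u + v + w - u' - w' with hv'
    have hord : u' < v' ∧ v' < w' := by omega
    refine ⟨(u' + 1, v' - u' + 1, w' - v' - 1), ?_, ?_⟩
    · simp only [TP, Finset.mem_filter, Finset.mem_product, Finset.mem_range]
      refine ⟨⟨?_, ?_, ?_⟩, ?_, ?_, ?_⟩ <;> omega
    · have g1 : u' + 1 - 1 = u' := by omega
      have g2 : u' + 1 + (v' - u' + 1) - 2 = v' := by omega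
      have g3 : u' + 1 + (v' - u' + 1) + (w' - v' - 1) - 1 = w' := by omega
      simp only [g1, g2, g3]
      apply Finset.ext
      intro z
      simp only [Finset.mem_insert, Finset.mem_singleton]
      omega

lemma TS_card (n : ℕ) : (TS n).card = n.choose 3 := by
  rw [TS, Finset.card_image_of_injOn ?_, TP_card]
  intro q hq q' hq' heq
  simp only [Finset.mem_coe, TP, Finset.mem_filter, Finset.mem_product, Finset.mem_range]
    at hq hq'
  obtain ⟨-, hq1, hq2, hq3⟩ := hq
  obtain ⟨-, hp1, hp2, hp3⟩ := hq'
  replace heq : spike q.1 q.2.1 q.2.2 (n - (q.1+q.2.1+q.2.2))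
      = spike q'.1 q'.2.1 q'.2.2 (n - (q'.1+q'.2.1+q'.2.2)) := heq
  have hF : ∀ i, F q.1 q.2.1 q.2.2 i = F q'.1 q'.2.1 q'.2.2 i := by
    intro i
    rw [← spike_getD q.1 q.2.1 q.2.2 (n - (q.1+q.2.1+q.2.2)) i, heq, spike_getD]
  have ea : q.1 = q'.1 := by
    have e1 := hF q.1
    have e2 := hF q'.1
    have c1 := F_cases q.1 q.2.1 q.2.2 q.1
    have c2 := F_cases q'.1 q'.2.1 q'.2.2 q.1
    have c3 := F_cases q.1 q.2.1 q.2.2 q'.1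
    have c4 := F_cases q'.1 q'.2.1 q'.2.2 q'.1
    omega
  have em : q.2.1 = q'.2.1 := by
    have e1 := hF (q.1 + q.2.1 - 1)
    have e2 := hF (q'.1 + q'.2.1 - 1)
    have c1 := F_cases q.1 q.2.1 q.2.2 (q.1 + q.2.1 - 1)
    have c2 := F_cases q'.1 q'.2.1 q'.2.2 (q.1 + q.2.1 - 1)
    have c3 := F_cases q.1 q.2.1 q.2.2 (q'.1 + q'.2.1 - 1)
    have c4 := F_cases q'.1 q'.2.1 q'.2.2 (q'.1 + q'.2.1 - 1)
    omega
  have eb : q.2.2 = q'.2.2 := by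
    have e1 := hF (q.1 + q.2.1 + q.2.2)
    have e2 := hF (q'.1 + q'.2.1 + q'.2.2)
    have c1 := F_cases q.1 q.2.1 q.2.2 (q.1 + q.2.1 + q.2.2)
    have c2 := F_cases q'.1 q'.2.1 q'.2.2 (q.1 + q.2.1 + q.2.2)
    have c3 := F_cases q.1 q.2.1 q.2.2 (q'.1 + q'.2.1 + q'.2.2)
    have c4 := F_cases q'.1 q'.2.1 q'.2.2 (q'.1 + q'.2.1 + q'.2.2)
    omega
  exact Prod.ext ea (Prod.ext em eb)

lemma BS_TS_disjoint (n : ℕ) (hn : 1 ≤ n) : Disjoint (BS n) (TS n) := by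
  rw [Finset.disjoint_left]
  intro z hzB hzT
  have hs := ((mem_BS n hn z).mp hzB).2.2
  rw [TS, Finset.mem_image] at hzT
  obtain ⟨q, hq, rfl⟩ := hzT
  simp only [TP, Finset.mem_filter, Finset.mem_product, Finset.mem_range] at hq
  obtain ⟨-, h1, h2, -⟩ := hq
  have := hs (q.1 + q.2.1 - 1)
  rw [spike_getD] at this
  unfold F at this
  split_ifs at this <;> omega

lemma set_eq (n : ℕ) (hn : 1 ≤ n) :
    {x : List ℕ | x.length = n ∧ IsAscSeq x ∧ Avoids [0, 1, 0, 2] x ∧ Avoids [0, 1, 1, 2] x ∧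
      Avoids [0, 1, 2, 1] x} = ↑(BS n ∪ TS n) := by
  ext z
  simp only [Set.mem_setOf_eq, Finset.coe_union, Set.mem_union, Finset.mem_coe]
  constructor
  · rintro ⟨hlen, hasc, hA, hB, hC⟩
    rcases forward z hasc hA hB hC with hsmall | ⟨a, m, b, ha, hm, hsum, hsp⟩
    · left
      rw [mem_BS n hn]
      refine ⟨hlen, hasc.2.1, ?_⟩
      intro i
      rcases lt_or_ge i z.length with h | h
      · rw [List.getD_eq_getElem _ _ h]; exact hsmall _ (List.getElem_mem _)
      · rw [List.getD_eq_default _ _ h]; omega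
    · right
      rw [TS, Finset.mem_image]
      refine ⟨(a, m, b), ?_, ?_⟩
      · simp only [TP, Finset.mem_filter, Finset.mem_product, Finset.mem_range]
        exact ⟨⟨by omega, by omega, by omega⟩, by omega, by omega, by omega⟩
      · rw [← hlen]
        exact hsp.symm
  · rintro (hz | hz)
    · rw [mem_BS n hn] at hz
      obtain ⟨hlen, h0, hs⟩ := hz
      have hne : z ≠ [] := by
        intro hc
        rw [hc] at hlen
        simp at hlen
        omega
      have hav := binsmall_avoids z hs
      refine ⟨hlen, ⟨hne, h0, ?_⟩, hav.1, hav.2.1, hav.2.2⟩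
      intro i hi1 hi2
      have := hs i
      omega
    · rw [TS, Finset.mem_image] at hz
      obtain ⟨q, hq, rfl⟩ := hz
      simp only [TP, Finset.mem_filter, Finset.mem_product, Finset.mem_range] at hq
      obtain ⟨-, h1, h2, h3⟩ := hq
      have hsp := spike_avoids q.1 q.2.1 q.2.2 (n - (q.1+q.2.1+q.2.2)) h1 h2
      exact ⟨by rw [spike_length]; omega, spike_isAscSeq _ _ _ _ h1 h2, hsp.1, hsp.2.1, hsp.2.2⟩

theorem stmt_10 (n : ℕ) (hn : 1 ≤ n) :
    Nat.card {x : List ℕ // x.length = n ∧ IsAscSeq x ∧ Avoids [0, 1, 0, 2] x ∧ Avoids [0, 1, 1, 2] x ∧ Avoids [0, 1, 2, 1] x} = 2 ^ (n - 1) + Nat.choose n 3 := by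
  have hcard : Nat.card {x : List ℕ // x.length = n ∧ IsAscSeq x ∧ Avoids [0, 1, 0, 2] x ∧
      Avoids [0, 1, 1, 2] x ∧ Avoids [0, 1, 2, 1] x}
      = ({x : List ℕ | x.length = n ∧ IsAscSeq x ∧ Avoids [0, 1, 0, 2] x ∧ Avoids [0, 1, 1, 2] x ∧
        Avoids [0, 1, 2, 1] x} : Set (List ℕ)).ncard := Nat.card_coe_set_eq _
  rw [hcard, set_eq n hn, Set.ncard_coe_finset,
    Finset.card_union_of_disjoint (BS_TS_disjoint n hn), BS_card, TS_card]
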